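/- arXiv:2302.03653 — 4 statements merged into one kernel-verified Lean document; each statement's English description precedes it below -/
import Mathlib

section
/- Let Δ be a simplicial complex on [n] and let P be a prime ideal of R_Δ not containing t such that P is generated by a subset of the monomial generators {x_F t : F ∈ Δ}. Then there exists i ∈ [n] with x_i t ∈ P, and moreover for this i and every face F ∈ Δ with i ∈ F one has x_F t ∈ P; that is, P contains the ideal Q_i = (x_F t : F ∈ Δ, i ∈ F). -/
open MvPolynomial Finset

/-- The monomial generator `x_F t` of the toric ring `R_Δ` (variable `none` is `t`). -/
noncomputable def gen (K : Type*) [Field K] {n : ℕ} (F : Finset (Fin n)) :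
    MvPolynomial (Option (Fin n)) K :=
  X none * ∏ i ∈ F, X (some i)

/-- `Δ` is a simplicial complex on `[n]`. -/
def IsSC {n : ℕ} (Δ : Set (Finset (Fin n))) : Prop :=
  ∅ ∈ Δ ∧ (∀ i, {i} ∈ Δ) ∧ ∀ F ∈ Δ, ∀ G ⊆ F, G ∈ Δ

lemma gen_mul_gen {K : Type*} [Field K] {n : ℕ} {F : Finset (Fin n)} {i : Fin n}
    (hi : i ∈ F) :
    gen K ∅ * gen K F = gen K {i} * gen K (F.erase i) := by
  unfold gen
  rw [Finset.prod_empty, Finset.prod_singleton, ← Finset.mul_prod_erase F _ hi]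
  ring

/-- Let `P` be a nonzero prime ideal of `R_Δ` not containing `t`, generated by a subset of
the monomial generators `x_F t`. Then there is `i ∈ [n]` with `x_i t ∈ P` and `x_F t ∈ P`
for every face `F ∈ Δ` with `i ∈ F`; i.e. `P ⊇ Q_i`. -/
theorem stmt5 {K : Type*} [Field K] {n : ℕ} (Δ : Set (Finset (Fin n))) (hΔ : IsSC Δ)
    (S : Set (Finset (Fin n))) (hS : S ⊆ Δ)
    (P : Ideal (Algebra.adjoin K {g | ∃ F ∈ Δ, g = gen K F})) (hP : P.IsPrime)
    (hPne : P ≠ ⊥)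
    (hPspan : P = Ideal.span {g : Algebra.adjoin K {g | ∃ F ∈ Δ, g = gen K F} |
      ∃ F ∈ S, (g : MvPolynomial (Option (Fin n)) K) = gen K F})
    (ht : (⟨gen K ∅, Algebra.subset_adjoin ⟨∅, hΔ.1, rfl⟩⟩ :
      Algebra.adjoin K {g | ∃ F ∈ Δ, g = gen K F}) ∉ P) :
    ∃ i : Fin n,
      (⟨gen K {i}, Algebra.subset_adjoin ⟨{i}, hΔ.2.1 i, rfl⟩⟩ :
        Algebra.adjoin K {g | ∃ F ∈ Δ, g = gen K F}) ∈ P ∧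
      ∀ F : Finset (Fin n), ∀ hF : F ∈ Δ, i ∈ F →
        (⟨gen K F, Algebra.subset_adjoin ⟨F, hF, rfl⟩⟩ :
          Algebra.adjoin K {g | ∃ F ∈ Δ, g = gen K F}) ∈ P := by
  classical
  let e : ∀ F : Finset (Fin n), F ∈ Δ →
      Algebra.adjoin K {g | ∃ F ∈ Δ, g = gen K F} := fun F hF =>
    ⟨gen K F, Algebra.subset_adjoin ⟨F, hF, rfl⟩⟩
  -- key multiplicative identity in R
  have key : ∀ (F : Finset (Fin n)) (hF : F ∈ Δ) (i : Fin n) (hi : i ∈ F),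
      e ∅ hΔ.1 * e F hF = e {i} (hΔ.2.1 i) *
        e (F.erase i) (hΔ.2.2 F hF _ (Finset.erase_subset _ _)) := by
    intro F hF i hi
    apply Subtype.ext
    push_cast
    exact gen_mul_gen hi
  -- if e F ∈ P for nonempty F, then the product identity plus primality gives a vertex
  have step : ∀ (F : Finset (Fin n)) (hF : F ∈ Δ), F.Nonempty →
      e F hF ∈ P → ∃ i : Fin n, e {i} (hΔ.2.1 i) ∈ P := by
    intro F
    induction F using Finset.strongInduction with
    | _ F ih =>
      intro hF hFne hFP
      obtain ⟨i, hi⟩ := hFne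
      have hmul : e {i} (hΔ.2.1 i) *
          e (F.erase i) (hΔ.2.2 F hF _ (Finset.erase_subset _ _)) ∈ P := by
        rw [← key F hF i hi]
        exact Ideal.mul_mem_left P _ hFP
      rcases hP.mem_or_mem hmul with h | h
      · exact ⟨i, h⟩
      · by_cases hE : F.erase i = ∅
        · exfalso
          apply ht
          have : e (F.erase i) (hΔ.2.2 F hF _ (Finset.erase_subset _ _)) =
              e ∅ hΔ.1 := by
            apply Subtype.ext
            simp only [e]
            rw [hE]
          rwa [this] at h
        · exact ih (F.erase i) (Finset.erase_ssubset hi)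
            (hΔ.2.2 F hF _ (Finset.erase_subset _ _))
            (Finset.nonempty_of_ne_empty hE) h
  -- P contains a generator e F with F nonempty
  obtain ⟨g, hgS, hg0⟩ : ∃ g ∈ {g : Algebra.adjoin K {g | ∃ F ∈ Δ, g = gen K F} | ∃ F ∈ S,
      (g : MvPolynomial (Option (Fin n)) K) = gen K F}, g ≠ 0 := by
    by_contra h
    push_neg at h
    exact hPne (by rw [hPspan, Ideal.span_eq_bot]; exact h)
  obtain ⟨F, hFS, hFg⟩ := hgS
  have hgP : g ∈ P := by
    rw [hPspan]
    exact Ideal.subset_span ⟨F, hFS, hFg⟩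
  have hge : g = e F (hS hFS) := Subtype.ext hFg
  have hFne : F.Nonempty := by
    rcases Finset.eq_empty_or_nonempty F with h | h
    · exfalso
      apply ht
      subst h
      rwa [hge] at hgP
    · exact h
  obtain ⟨i, hiP⟩ := step F (hS hFS) hFne (hge ▸ hgP)
  refine ⟨i, hiP, ?_⟩
  intro G hG hiG
  have hmul : e ∅ hΔ.1 * e G hG ∈ P := by
    rw [key G hG i hiG]
    exact Ideal.mul_mem_right _ _ hiP
  rcases hP.mem_or_mem hmul with h | h
  · exact absurd h ht
  · exact h
end

section
/- Let Δ be a 1-dimensional simplicial complex whose graph G_Δ contains two vertex-disjoint induced odd cycles C_1 and C_2 with no edge of G_Δ joining a vertex of C_1 to a vertex of C_2. Let u = x_1⋯x_{2n} t^n be the monomial whose support is V(C_1) ∪ V(C_2) (with |V(C_1)|+|V(C_2)| = 2n) and t-degree n. Then u lies in the quotient field of R_Δ, u² ∈ R_Δ, but u ∉ R_Δ; consequently R_Δ is not integrally closed (not normal). -/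
/-!
Every element of `R_Δ` is a linear combination of monomials `x^a tᵏ` that are products of `k`
faces. A face has at most two vertices, so `∑ aᵢ ≤ 2k`; when equality holds all `k` faces are
edges, and since no edge joins the two cycles, each meets `C₁` in zero or two vertices, so the
`C₁`-degree of `a` is even. For `u` equality holds but its `C₁`-degree `2m - 1` is odd, hence
`u ∉ R_Δ`. On the other hand `tⁿ u = ∏ᵢ xᵢ t ∈ R_Δ` and `u²` is the product of the edge
generators of both cycles, so `u` is a fraction of `R_Δ` integral over it.
-/

open MvPolynomial Finset

/-- The monomial generator `x_F t` for `F ⊆ ℕ` (variable `none` is `t`). -/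
noncomputable def genN (K : Type*) [Field K] (F : Finset ℕ) :
    MvPolynomial (Option ℕ) K :=
  X none * ∏ i ∈ F, X (some i)

theorem Subalgebra.mem_of_mul_mem_of_pow_mem {R A : Type*} [CommRing R] [CommRing A] [IsDomain A]
    [Algebra R A] (S : Subalgebra R A) [IsIntegrallyClosed S] {u : A} {b : S} (hb : b ≠ 0)
    (hbu : ↑b * u ∈ S) {k : ℕ} (hk : k ≠ 0) (huk : u ^ k ∈ S) : u ∈ S := by
  set a : S := ⟨b * u, hbu⟩
  have hdvd : b ^ k ∣ a ^ k := ⟨⟨u ^ k, huk⟩, Subtype.ext (by simp [a, mul_pow])⟩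
  obtain ⟨c, hc⟩ := (IsIntegrallyClosed.pow_dvd_pow_iff hk).mp hdvd
  have hb' : (b : A) ≠ 0 := by simpa using hb
  have hbc : (b : A) * u = b * c := by simpa [a] using congrArg Subtype.val hc
  exact mul_left_cancel₀ hb' hbc ▸ c.2

theorem MvPolynomial.support_subset_of_mem_adjoin {σ R : Type*} [CommSemiring R]
    {M : AddSubmonoid (σ →₀ ℕ)} {G : Set (MvPolynomial σ R)}
    (hG : ∀ g ∈ G, ↑g.support ⊆ (M : Set (σ →₀ ℕ))) {p : MvPolynomial σ R}
    (hp : p ∈ Algebra.adjoin R G) : ↑p.support ⊆ (M : Set (σ →₀ ℕ)) := by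
  classical
  induction hp using Algebra.adjoin_induction with
  | mem g hg => exact hG g hg
  | algebraMap r =>
    refine (Finset.coe_subset.mpr support_monomial_subset).trans ?_
    simp
  | add p q _ _ hp hq =>
    refine (Finset.coe_subset.mpr support_add).trans ?_
    simpa [Set.union_subset_iff] using ⟨hp, hq⟩
  | mul p q _ _ hp hq =>
    intro e he
    obtain ⟨e₁, he₁, e₂, he₂, rfl⟩ := Finset.mem_add.mp (support_mul p q he)
    exact M.add_mem (hp he₁) (hq he₂)

theorem Finset.prod_Ico_mul_succ_mul_eq_sq {M : Type*} [CommMonoid M] (f : ℕ → M) {a b : ℕ}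
    (hab : a ≤ b) :
    (∏ k ∈ Ico a b, f k * f (k + 1)) * (f a * f b) = (∏ k ∈ Icc a b, f k) ^ 2 := by
  have hbot : ∏ k ∈ Icc a b, f k = f a * ∏ k ∈ Ioc a b, f k := by
    rw [← Ioc_insert_left hab, prod_insert left_notMem_Ioc]
  have htop : ∏ k ∈ Icc a b, f k = f b * ∏ k ∈ Ico a b, f k := by
    rw [← Ico_insert_right hab, prod_insert right_notMem_Ico]
  rw [prod_mul_distrib, prod_Ico_add', Ico_add_one_add_one_eq_Ioc, sq]
  nth_rw 1 [hbot]
  rw [htop]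
  ac_rfl

noncomputable def xtExponent (k : ℕ) (F : Finset ℕ) : Option ℕ →₀ ℕ :=
  Finsupp.single none k + ∑ i ∈ F, Finsupp.single (some i) 1

lemma xtExponent_none (k : ℕ) (F : Finset ℕ) : xtExponent k F none = k := by
  simp [xtExponent]

lemma sum_xtExponent_some (k : ℕ) (F V : Finset ℕ) :
    ∑ i ∈ V, xtExponent k F (some i) = #(V ∩ F) := by
  classical
  simp [xtExponent, Finsupp.single_apply]

lemma monomial_xtExponent {K : Type*} [CommSemiring K] (k : ℕ) (F : Finset ℕ) :
    monomial (xtExponent k F) (1 : K) = (∏ i ∈ F, X (some i)) * X none ^ k := by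
  rw [xtExponent, add_comm, ← mul_one (1 : K), ← monomial_mul, monomial_sum_one,
    ← X_pow_eq_monomial]
  rfl

lemma genN_eq_monomial (K : Type*) [Field K] (F : Finset ℕ) :
    genN K F = monomial (xtExponent 1 F) 1 := by
  rw [monomial_xtExponent, genN, pow_one, mul_comm]

/-- Products of `k` faces inside `V`, of size at most two and none meeting `V₁` in exactly one
vertex, have their exponents here: equality in the bound forces every face to be an edge. -/
def parityCone (V V₁ : Finset ℕ) : AddSubmonoid (Option ℕ →₀ ℕ) where
  carrier := {e | ∑ i ∈ V, e (some i) ≤ 2 * e none ∧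
    (∑ i ∈ V, e (some i) = 2 * e none → Even (∑ i ∈ V₁, e (some i)))}
  zero_mem' := by simp
  add_mem' := by
    rintro e f ⟨he, he'⟩ ⟨hf, hf'⟩
    simp only [Set.mem_ofPred_eq, Finsupp.add_apply, sum_add_distrib] at *
    refine ⟨by omega, fun h => (he' (by omega)).add (hf' (by omega))⟩

lemma xtExponent_mem_parityCone_iff {k : ℕ} {F V V₁ : Finset ℕ} :
    xtExponent k F ∈ parityCone V V₁ ↔
      #(V ∩ F) ≤ 2 * k ∧ (#(V ∩ F) = 2 * k → Even #(V₁ ∩ F)) := by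
  simp only [parityCone, AddSubmonoid.mem_mk, AddSubsemigroup.mem_mk, Set.mem_ofPred_eq,
    sum_xtExponent_some, xtExponent_none]

lemma xtExponent_notMem_parityCone {k : ℕ} {V V₁ : Finset ℕ} (hV : #V = 2 * k)
    (hV₁ : V₁ ⊆ V) (hodd : Odd #V₁) : xtExponent k V ∉ parityCone V V₁ := by
  rw [xtExponent_mem_parityCone_iff, inter_self, inter_eq_left.mpr hV₁]
  exact fun h => Nat.not_even_iff_odd.mpr hodd (h.2 hV)

/-- The ring `R_Δ = K[x_F t : F ∈ Δ]`. -/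
noncomputable abbrev toricRing (K : Type*) [Field K] (Δ : Set (Finset ℕ)) :
    Subalgebra K (MvPolynomial (Option ℕ) K) :=
  Algebra.adjoin K {g | ∃ F ∈ Δ, g = genN K F}

section toricRing

variable {K : Type*} [Field K] {Δ : Set (Finset ℕ)}

lemma genN_mem_toricRing {F : Finset ℕ} (hF : F ∈ Δ) : genN K F ∈ toricRing K Δ :=
  Algebra.subset_adjoin ⟨F, hF, rfl⟩

lemma X_none_mem_toricRing (hempty : ∅ ∈ Δ) :
    (X none : MvPolynomial (Option ℕ) K) ∈ toricRing K Δ := by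
  simpa [genN] using genN_mem_toricRing (K := K) hempty

lemma prod_X_mul_X_none_pow_card_mem_toricRing {V : Finset ℕ} (hV : ∀ i ∈ V, {i} ∈ Δ) :
    (∏ i ∈ V, X (some i)) * X none ^ #V ∈ toricRing K Δ := by
  have h : ∏ i ∈ V, genN K {i} = (∏ i ∈ V, X (some i)) * X none ^ #V := by
    simp [genN, prod_mul_distrib, mul_comm]
  exact h ▸ Subalgebra.prod_mem _ fun i hi => genN_mem_toricRing (hV i hi)

lemma genN_pair {a b : ℕ} (hab : a ≠ b) :
    genN K {a, b} = X none * (X (some a) * X (some b)) := by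
  rw [genN, prod_pair hab]

lemma prod_genN_cycle {a b : ℕ} (hab : a < b) :
    (∏ k ∈ Ico a b, genN K {k, k + 1}) * genN K {a, b} =
      (∏ k ∈ Icc a b, X (some k)) ^ 2 * X none ^ (b - a + 1) := by
  have hedge : ∀ k, genN K {k, k + 1} = X none * (X (some k) * X (some (k + 1))) :=
    fun k => genN_pair (Nat.ne_add_one k)
  rw [← prod_Ico_mul_succ_mul_eq_sq _ hab.le, genN_pair hab.ne, prod_congr rfl fun k _ => hedge k,
    prod_mul_distrib, prod_const, Nat.card_Ico, pow_succ]
  ring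

lemma cycle_monomial_mem_toricRing {a b : ℕ} (hab : a < b)
    (hpath : ∀ k ∈ Ico a b, {k, k + 1} ∈ Δ) (hclose : {a, b} ∈ Δ) :
    (∏ k ∈ Icc a b, X (some k)) ^ 2 * X none ^ (b - a + 1) ∈ toricRing K Δ :=
  prod_genN_cycle (K := K) hab ▸
    mul_mem (Subalgebra.prod_mem _ fun k hk => genN_mem_toricRing (hpath k hk))
      (genN_mem_toricRing hclose)

lemma monomial_notMem_toricRing {M : AddSubmonoid (Option ℕ →₀ ℕ)}
    (hΔ : ∀ F ∈ Δ, xtExponent 1 F ∈ M) {e : Option ℕ →₀ ℕ} (he : e ∉ M) :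
    monomial e 1 ∉ toricRing K Δ := by
  intro hmem
  have hsupp := support_subset_of_mem_adjoin (M := M) ?_ hmem
  · exact he (hsupp (by simp))
  rintro _ ⟨F, hF, rfl⟩
  rw [genN_eq_monomial]
  exact (Finset.coe_subset.mpr support_monomial_subset).trans (by simpa using hΔ F hF)

end toricRing

section cycles

variable {m n : ℕ} {Δ : Set (Finset ℕ)}

lemma singleton_mem_of_cycles (hsub : ∀ F ∈ Δ, ∀ G ⊆ F, G ∈ Δ)
    (hC1 : ∀ k, 1 ≤ k → k ≤ 2 * m - 2 → ({k, k + 1} : Finset ℕ) ∈ Δ)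
    (hC1' : ({1, 2 * m - 1} : Finset ℕ) ∈ Δ)
    (hC2 : ∀ k, 2 * m ≤ k → k ≤ 2 * n - 1 → ({k, k + 1} : Finset ℕ) ∈ Δ)
    (hC2' : ({2 * m, 2 * n} : Finset ℕ) ∈ Δ) :
    ∀ i ∈ Icc 1 (2 * n), ({i} : Finset ℕ) ∈ Δ := by
  intro i hi
  rw [mem_Icc] at hi
  obtain ⟨F, hF, hiF⟩ : ∃ F ∈ Δ, i ∈ F := by
    by_cases h1 : i ≤ 2 * m - 2
    · exact ⟨_, hC1 i hi.1 h1, by simp⟩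
    by_cases h2 : i = 2 * m - 1
    · exact ⟨_, hC1', by simp [h2]⟩
    by_cases h3 : i ≤ 2 * n - 1
    · exact ⟨_, hC2 i (by omega) h3, by simp⟩
    · exact ⟨_, hC2', by simp; omega⟩
  exact hsub F hF {i} (singleton_subset_iff.mpr hiF)

lemma xtExponent_mem_parityCone_of_mem (hsub : ∀ F ∈ Δ, ∀ G ⊆ F, G ∈ Δ)
    (hvert : ∀ F ∈ Δ, ∀ v ∈ F, v ∈ Finset.Icc 1 (2 * n))
    (hdim : ∀ F ∈ Δ, F.card ≤ 2)
    (hcross : ∀ i j, 1 ≤ i → i ≤ 2 * m - 1 → 2 * m ≤ j → j ≤ 2 * n →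
      ({i, j} : Finset ℕ) ∉ Δ)
    {F : Finset ℕ} (hF : F ∈ Δ) :
    xtExponent 1 F ∈ parityCone (Icc 1 (2 * n)) (Icc 1 (2 * m - 1)) := by
  have hside : ∀ a ∈ F, ∀ b ∈ F, a ∈ Icc 1 (2 * m - 1) → b ∈ Icc 1 (2 * m - 1) := by
    intro a ha b hb haC
    by_contra hbC
    have hbV := hvert F hF b hb
    simp only [mem_Icc] at haC hbC hbV
    exact hcross a b (by omega) (by omega) (by omega) (by omega)
      (hsub F hF {a, b} (insert_subset ha (singleton_subset_iff.mpr hb)))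
  rw [xtExponent_mem_parityCone_iff, inter_eq_right.mpr fun v hv => hvert F hF v hv]
  refine ⟨hdim F hF, fun hcard => ?_⟩
  by_cases hmeet : ∃ a ∈ F, a ∈ Icc 1 (2 * m - 1)
  · obtain ⟨a, ha, haC⟩ := hmeet
    rw [inter_eq_right.mpr fun b hb => hside a ha b hb haC, hcard]
    exact even_two
  · simp only [not_exists, not_and] at hmeet
    rw [disjoint_iff_inter_eq_empty.mp (disjoint_right.mpr hmeet), card_empty]
    exact Even.zero

lemma sq_prod_X_mul_X_none_pow_mem_toricRing {K : Type*} [Field K] (hm : 2 ≤ m) (hn : m + 1 ≤ n)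
    (hC1 : ∀ k, 1 ≤ k → k ≤ 2 * m - 2 → ({k, k + 1} : Finset ℕ) ∈ Δ)
    (hC1' : ({1, 2 * m - 1} : Finset ℕ) ∈ Δ)
    (hC2 : ∀ k, 2 * m ≤ k → k ≤ 2 * n - 1 → ({k, k + 1} : Finset ℕ) ∈ Δ)
    (hC2' : ({2 * m, 2 * n} : Finset ℕ) ∈ Δ) :
    (∏ i ∈ Icc 1 (2 * n), X (some i)) ^ 2 * X none ^ (2 * n) ∈ toricRing K Δ := by
  have hcycle₁ := cycle_monomial_mem_toricRing (K := K) (a := 1) (b := 2 * m - 1) (by omega)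
    (fun k hk => by rw [mem_Ico] at hk; exact hC1 k hk.1 (by omega)) hC1'
  have hcycle₂ := cycle_monomial_mem_toricRing (K := K) (a := 2 * m) (b := 2 * n) (by omega)
    (fun k hk => by rw [mem_Ico] at hk; exact hC2 k hk.1 (by omega)) hC2'
  have hsplit : Icc 1 (2 * n) = Icc 1 (2 * m - 1) ∪ Icc (2 * m) (2 * n) := by
    ext; simp only [mem_Icc, mem_union]; omega
  have hdisj : Disjoint (Icc 1 (2 * m - 1)) (Icc (2 * m) (2 * n)) := by
    rw [disjoint_left]; simp only [mem_Icc]; omega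
  have hpow : (X none : MvPolynomial (Option ℕ) K) ^ (2 * n) =
      X none ^ (2 * m - 1 - 1 + 1) * X none ^ (2 * n - 2 * m + 1) := by
    rw [← pow_add]
    congr 1
    omega
  convert mul_mem hcycle₁ hcycle₂ using 1
  rw [hsplit, prod_union hdisj, hpow]
  ring

end cycles

/-- Let `Δ` be a 1-dimensional simplicial complex on the vertex set `{1,…,2n}` whose graph
contains the two vertex-disjoint induced odd cycles `C₁` on `{1,…,2m-1}` and `C₂` on
`{2m,…,2n}`, with no edge of `G_Δ` joining them. Then `u = x_1⋯x_{2n} tⁿ` lies in the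
quotient field of `R_Δ`, `u² ∈ R_Δ`, but `u ∉ R_Δ`; consequently `R_Δ` is not normal. -/
theorem stmt6 {K : Type*} [Field K] (m n : ℕ) (hm : 2 ≤ m) (hn : m + 1 ≤ n)
    (Δ : Set (Finset ℕ))
    (hempty : ∅ ∈ Δ)
    (hsub : ∀ F ∈ Δ, ∀ G ⊆ F, G ∈ Δ)
    (hvert : ∀ F ∈ Δ, ∀ v ∈ F, v ∈ Finset.Icc 1 (2 * n))
    (hdim : ∀ F ∈ Δ, F.card ≤ 2)
    (hC1 : ∀ k, 1 ≤ k → k ≤ 2 * m - 2 → ({k, k + 1} : Finset ℕ) ∈ Δ)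
    (hC1' : ({1, 2 * m - 1} : Finset ℕ) ∈ Δ)
    (hC2 : ∀ k, 2 * m ≤ k → k ≤ 2 * n - 1 → ({k, k + 1} : Finset ℕ) ∈ Δ)
    (hC2' : ({2 * m, 2 * n} : Finset ℕ) ∈ Δ)
    (hcross : ∀ i j, 1 ≤ i → i ≤ 2 * m - 1 → 2 * m ≤ j → j ≤ 2 * n →
      ({i, j} : Finset ℕ) ∉ Δ)
    (u : MvPolynomial (Option ℕ) K)
    (hu : u = (∏ i ∈ Finset.Icc 1 (2 * n), X (some i)) * X none ^ n) :
    (∃ a b : Algebra.adjoin K {g | ∃ F ∈ Δ, g = genN K F}, b ≠ 0 ∧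
      (b : MvPolynomial (Option ℕ) K) * u = a) ∧
    u ^ 2 ∈ Algebra.adjoin K {g | ∃ F ∈ Δ, g = genN K F} ∧
    u ∉ Algebra.adjoin K {g | ∃ F ∈ Δ, g = genN K F} ∧
    ¬ IsIntegrallyClosed (Algebra.adjoin K {g | ∃ F ∈ Δ, g = genN K F}) := by
  have hcardV : #(Icc 1 (2 * n)) = 2 * n := by simp
  have hmul : X none ^ n * u ∈ toricRing K Δ := by
    have h := prod_X_mul_X_none_pow_card_mem_toricRing (K := K)
      (singleton_mem_of_cycles hsub hC1 hC1' hC2 hC2')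
    rw [hcardV] at h
    convert h using 1
    rw [hu]
    ring
  have hsq : u ^ 2 ∈ toricRing K Δ := by
    rw [hu, mul_pow, ← pow_mul, mul_comm n 2]
    exact sq_prod_X_mul_X_none_pow_mem_toricRing hm hn hC1 hC1' hC2 hC2'
  have hnotMem : u ∉ toricRing K Δ := by
    rw [hu, ← monomial_xtExponent]
    exact monomial_notMem_toricRing
      (fun F hF => xtExponent_mem_parityCone_of_mem hsub hvert hdim hcross hF)
      (xtExponent_notMem_parityCone hcardV (Icc_subset_Icc le_rfl (by omega))
        ⟨m - 1, by simp; omega⟩)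
  have hden : (⟨_, pow_mem (X_none_mem_toricRing hempty) n⟩ : toricRing K Δ) ≠ 0 :=
    fun h => pow_ne_zero n (X_ne_zero none) (congrArg Subtype.val h)
  exact ⟨⟨⟨_, hmul⟩, _, hden, rfl⟩, hsq, hnotMem,
    fun _ => hnotMem ((toricRing K Δ).mem_of_mul_mem_of_pow_mem hden hmul two_ne_zero hsq)⟩
end

section
/- Let Δ be a quasi-forest on [n]. Then the following are equivalent for the chordal graph G_Δ: (a) all minimal vertex covers of G_Δ have the same cardinality (G_Δ is unmixed); (b) [n] is the disjoint union of facets of Δ each of which contains a free vertex. -/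
open Finset

/-- `C` is a vertex cover of the graph `G_Δ`, where `Δ` is the simplicial complex generated
by the facets `F_0,…,F_m` (an edge of `G_Δ` is a pair of distinct vertices lying in a common
facet). -/
def IsVC {n m : ℕ} (F : Fin (m + 1) → Finset (Fin n)) (C : Finset (Fin n)) : Prop :=
  ∀ i j : Fin n, ∀ k : Fin (m + 1), i ≠ j → i ∈ F k → j ∈ F k → i ∈ C ∨ j ∈ C

/-- `C` is a minimal vertex cover of `G_Δ`. -/
def IsMinVC {n m : ℕ} (F : Fin (m + 1) → Finset (Fin n)) (C : Finset (Fin n)) : Prop :=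
  IsVC F C ∧ ∀ C' ⊆ C, IsVC F C' → C' = C

/-!
Minimal vertex covers of `G_Δ` are the complements of its maximal independent sets, so `G_Δ` is
unmixed iff it is well-covered. A leaf order makes `G_Δ` chordal (the free vertices of the last
leaf are simplicial, and otherwise that leaf can be dropped) and puts every clique inside a facet,
so the simplices `N[x]` of the simplicial vertices `x` are exactly the facets with a free vertex.

If the simplices partition the vertices, a maximal independent set meets each of them exactly
once. Conversely (Prisner–Topp–Vestergaard), in a well-covered chordal graph distinct simplices
are disjoint, since a shared vertex could be traded for the two simplicial vertices. They also
cover: otherwise the uncovered part `B` is again well-covered and, by induction, partitioned by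
simplices of `G[B]`. Every vertex of such a simplex `K` has a neighbour outside `K`, chordality
yields an independent set outside `K` dominating `K`, and a maximal independent set containing it
misses `K` and is therefore one element too small.
-/

namespace SimpleGraph

variable {α : Type*} {G : SimpleGraph α} {s t A T : Finset α} {x y z : α}

open Classical in
noncomputable def closedNbhdIn (G : SimpleGraph α) (s : Finset α) (x : α) : Finset α :=
  {y ∈ s | y = x ∨ G.Adj x y}

def IsSimplicialIn (G : SimpleGraph α) (s : Finset α) (x : α) : Prop :=
  G.IsClique (G.closedNbhdIn s x : Set α)

-- By Dirac's theorem, for finite graphs this is equivalent to having no induced cycle of length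
-- at least four.
def IsChordal (G : SimpleGraph α) : Prop :=
  ∀ s : Finset α, s.Nonempty → ∃ x ∈ s, G.IsSimplicialIn s x

def IsMaxIndepIn (G : SimpleGraph α) (s A : Finset α) : Prop :=
  Maximal (fun t : Finset α => t ⊆ s ∧ G.IsIndepSet (t : Set α)) A

def IsWellCoveredOn (G : SimpleGraph α) (s : Finset α) : Prop :=
  ∀ ⦃A B⦄, G.IsMaxIndepIn s A → G.IsMaxIndepIn s B → #A = #B

structure IsSimplicialPartition (G : SimpleGraph α) (s T : Finset α) : Prop where
  subset : T ⊆ s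
  isSimplicialIn : ∀ x ∈ T, G.IsSimplicialIn s x
  pairwiseDisjoint : (T : Set α).PairwiseDisjoint (G.closedNbhdIn s)
  exists_mem : ∀ v ∈ s, ∃ x ∈ T, v ∈ G.closedNbhdIn s x

lemma mem_closedNbhdIn : y ∈ G.closedNbhdIn s x ↔ y ∈ s ∧ (y = x ∨ G.Adj x y) := by
  simp [closedNbhdIn]

lemma closedNbhdIn_subset : G.closedNbhdIn s x ⊆ s := fun _ hy => (mem_closedNbhdIn.1 hy).1

lemma self_mem_closedNbhdIn (hx : x ∈ s) : x ∈ G.closedNbhdIn s x :=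
  mem_closedNbhdIn.2 ⟨hx, .inl rfl⟩

lemma mem_closedNbhdIn_of_adj (hy : y ∈ s) (h : G.Adj x y) : y ∈ G.closedNbhdIn s x :=
  mem_closedNbhdIn.2 ⟨hy, .inr h⟩

lemma adj_of_mem_closedNbhdIn (hy : y ∈ G.closedNbhdIn s x) (hne : y ≠ x) : G.Adj x y :=
  (mem_closedNbhdIn.1 hy).2.resolve_left hne

lemma isIndepSet_iff_forall_not_adj {u : Set α} :
    G.IsIndepSet u ↔ ∀ a ∈ u, ∀ b ∈ u, ¬G.Adj a b :=
  ⟨fun h _ ha _ hb hab => h ha hb hab.ne hab, fun h _ ha _ hb _ => h _ ha _ hb⟩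

lemma IsClique.subsingleton_inter_of_isIndepSet {K u : Set α} (hK : G.IsClique K)
    (hu : G.IsIndepSet u) : (K ∩ u).Subsingleton := by
  rintro a ⟨haK, hau⟩ b ⟨hbK, hbu⟩
  by_contra hab
  exact hu hau hbu hab (hK haK hbK hab)

lemma card_le_card_of_forall_mem_isClique {ι : Type*} {I : Finset ι} {K : ι → Finset α}
    (hA : G.IsIndepSet (A : Set α)) (hK : ∀ i ∈ I, G.IsClique (K i : Set α))
    (hcov : ∀ a ∈ A, ∃ i ∈ I, a ∈ K i) : #A ≤ #I :=
  card_le_card_of_forall_subsingleton (fun a i => a ∈ K i) hcov fun i hi =>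
    ((hK i hi).subsingleton_inter_of_isIndepSet hA).anti fun a ha => by
      simp only [Set.mem_ofPred_eq] at ha
      exact ⟨ha.2, ha.1⟩

lemma isMaxIndepIn_iff : G.IsMaxIndepIn s A ↔
    A ⊆ s ∧ G.IsIndepSet (A : Set α) ∧ ∀ v ∈ s, v ∉ A → ∃ a ∈ A, G.Adj a v := by
  classical
  constructor
  · rintro ⟨⟨hAs, hA⟩, hmax⟩
    refine ⟨hAs, hA, fun v hv hvA => ?_⟩
    by_contra! hfar
    have hins : insert v A ⊆ s ∧ G.IsIndepSet ((insert v A : Finset α) : Set α) := by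
      refine ⟨insert_subset hv hAs, ?_⟩
      rw [coe_insert]
      exact hA.insert fun a ha _ => ⟨fun hva => hfar a ha hva.symm, hfar a ha⟩
    exact hvA (hmax hins (subset_insert v A) (mem_insert_self v A))
  · rintro ⟨hAs, hA, hdom⟩
    refine ⟨⟨hAs, hA⟩, fun B ⟨hBs, hB⟩ hAB b hb => ?_⟩
    by_contra hbA
    obtain ⟨a, ha, hab⟩ := hdom b (hBs hb) hbA
    exact isIndepSet_iff_forall_not_adj.1 hB a (hAB ha) b hb hab

lemma exists_isMaxIndepIn_superset (ht : t ⊆ s) (hind : G.IsIndepSet (t : Set α)) :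
    ∃ A, t ⊆ A ∧ G.IsMaxIndepIn s A :=
  Set.Finite.exists_le_maximal
    (s.powerset.finite_toSet.subset fun _ hu => mem_powerset.2 hu.1) ⟨ht, hind⟩

theorem IsSimplicialPartition.card_eq (hT : G.IsSimplicialPartition s T)
    (hA : G.IsMaxIndepIn s A) : #A = #T := by
  obtain ⟨hAs, hAind, hdom⟩ := isMaxIndepIn_iff.1 hA
  refine le_antisymm (card_le_card_of_forall_mem_isClique hAind hT.isSimplicialIn
    fun a ha => hT.exists_mem a (hAs ha)) ?_
  refine card_le_card_of_forall_subsingleton (fun x a => a ∈ G.closedNbhdIn s x)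
    (fun x hx => ?_) fun a _ x hx y hy => ?_
  · by_cases hxA : x ∈ A
    · exact ⟨x, hxA, self_mem_closedNbhdIn (hT.subset hx)⟩
    · obtain ⟨a, ha, hax⟩ := hdom x (hT.subset hx) hxA
      exact ⟨a, ha, mem_closedNbhdIn_of_adj (hAs ha) hax.symm⟩
  · simp only [Set.mem_ofPred_eq] at hx hy
    exact hT.pairwiseDisjoint.elim_finset hx.1 hy.1 a hx.2 hy.2

theorem IsSimplicialPartition.isWellCoveredOn (hT : G.IsSimplicialPartition s T) :
    G.IsWellCoveredOn s := fun _ _ hA hB => (hT.card_eq hA).trans (hT.card_eq hB).symm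

theorem IsWellCoveredOn.disjoint_closedNbhdIn (hw : G.IsWellCoveredOn s)
    (hx : G.IsSimplicialIn s x) (hy : G.IsSimplicialIn s y) (hxs : x ∈ s) (hys : y ∈ s)
    (hxy : x ≠ y) (hadj : ¬G.Adj x y) :
    Disjoint (G.closedNbhdIn s x) (G.closedNbhdIn s y) := by
  classical
  rw [Finset.disjoint_left]
  intro v hvx hvy
  obtain ⟨A, hvA, hA⟩ := exists_isMaxIndepIn_superset (G := G)
    (singleton_subset_iff.2 (closedNbhdIn_subset hvx)) (by simp)
  obtain ⟨hAs, hAind, -⟩ := isMaxIndepIn_iff.1 hA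
  replace hvA : v ∈ A := singleton_subset_iff.1 hvA
  have hfar : ∀ z, G.IsSimplicialIn s z → v ∈ G.closedNbhdIn s z →
      ∀ a ∈ A.erase v, a ∉ G.closedNbhdIn s z := fun z hz hvz a ha haz =>
    isIndepSet_iff_forall_not_adj.1 hAind a (mem_of_mem_erase ha) v hvA
      (hz haz hvz (ne_of_mem_erase ha))
  have hnadj : ∀ z, G.IsSimplicialIn s z → v ∈ G.closedNbhdIn s z →
      ∀ a ∈ A.erase v, ¬G.Adj z a ∧ ¬G.Adj a z := fun z hz hvz a ha =>
    have h := fun hza => hfar z hz hvz a ha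
      (mem_closedNbhdIn_of_adj (hAs (mem_of_mem_erase ha)) hza)
    ⟨h, fun haz => h haz.symm⟩
  have hxA : x ∉ A.erase v := fun h => hfar x hx hvx x h (self_mem_closedNbhdIn hxs)
  have hyA : y ∉ A.erase v := fun h => hfar y hy hvy y h (self_mem_closedNbhdIn hys)
  set B := insert x (insert y (A.erase v))
  have hBs : B ⊆ s :=
    insert_subset hxs (insert_subset hys ((erase_subset v A).trans hAs))
  have hBind : G.IsIndepSet (B : Set α) := by
    simp only [B, coe_insert]
    refine ((hAind.mono (coe_subset.2 (erase_subset v A))).insert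
      fun a ha _ => hnadj y hy hvy a ha).insert fun b hb _ => ?_
    rcases hb with rfl | hb
    · exact ⟨hadj, fun h => hadj h.symm⟩
    · exact hnadj x hx hvx b hb
  obtain ⟨A', hBA', hA'⟩ := exists_isMaxIndepIn_superset hBs hBind
  have hcardB : #B = #A + 1 := by
    rw [card_insert_of_notMem (by simpa [hxy] using hxA), card_insert_of_notMem hyA,
      card_erase_add_one hvA]
  have := card_le_card hBA'
  have := hw hA hA'
  omega

lemma IsSimplicialIn.adj_of_mem_clique [DecidableEq α] {K : Finset α} (hz : G.IsSimplicialIn s z)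
    (hKs : K ⊆ s) (hK : G.IsClique (K : Set α)) (hzK : z ∈ K) {u : α} (hu : u ∈ s \ K)
    (huz : G.Adj u z) {w : α} (hw : w ∈ K) : G.Adj u w := by
  rcases eq_or_ne w z with rfl | hwz
  · exact huz
  exact hz (mem_closedNbhdIn_of_adj (sdiff_subset hu) huz.symm)
    (mem_closedNbhdIn_of_adj (hKs hw) (hK hzK hw hwz.symm))
    fun h => (mem_sdiff.1 hu).2 (h ▸ hw)

lemma insert_isIndepSet_dominating [DecidableEq α] {K I : Finset α} (hzs : z ∈ s) (hzK : z ∉ K)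
    (hKs : K ⊆ s) (hI : I ⊆ (s \ G.closedNbhdIn s z) \ (K ∩ (s \ G.closedNbhdIn s z)))
    (hind : G.IsIndepSet (I : Set α))
    (hdom : ∀ w ∈ K ∩ (s \ G.closedNbhdIn s z), ∃ a ∈ I, G.Adj a w) :
    insert z I ⊆ s \ K ∧ G.IsIndepSet ((insert z I : Finset α) : Set α) ∧
      ∀ w ∈ K, ∃ a ∈ insert z I, G.Adj a w := by
  set s' := s \ G.closedNbhdIn s z
  have hIs' : ∀ a ∈ I, a ∈ s' := fun a ha => (mem_sdiff.1 (hI ha)).1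
  refine ⟨insert_subset (mem_sdiff.2 ⟨hzs, hzK⟩) fun a ha => ?_, ?_, fun w hw => ?_⟩
  · exact mem_sdiff.2 ⟨(mem_sdiff.1 (hIs' a ha)).1,
      fun haK => (mem_sdiff.1 (hI ha)).2 (mem_inter.2 ⟨haK, hIs' a ha⟩)⟩
  · rw [coe_insert]
    refine hind.insert fun a ha _ => ?_
    have hza : ¬G.Adj z a := fun h =>
      (mem_sdiff.1 (hIs' a ha)).2 (mem_closedNbhdIn_of_adj (mem_sdiff.1 (hIs' a ha)).1 h)
    exact ⟨hza, fun h => hza h.symm⟩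
  · by_cases hws' : w ∈ s'
    · obtain ⟨a, ha, haw⟩ := hdom w (mem_inter.2 ⟨hw, hws'⟩)
      exact ⟨a, mem_insert_of_mem ha, haw⟩
    · refine ⟨z, mem_insert_self z I, adj_of_mem_closedNbhdIn (s := s) ?_ fun h => hzK (h ▸ hw)⟩
      by_contra h
      exact hws' (mem_sdiff.2 ⟨hKs hw, h⟩)

theorem IsChordal.exists_isIndepSet_dominating [DecidableEq α] (hG : G.IsChordal)
    (s : Finset α) :
    ∀ K : Finset α, K ⊆ s → G.IsClique (K : Set α) → (∀ w ∈ K, ∃ p ∈ s \ K, G.Adj p w) →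
      ∃ I ⊆ s \ K, G.IsIndepSet (I : Set α) ∧ ∀ w ∈ K, ∃ a ∈ I, G.Adj a w := by
  induction s using Finset.strongInduction with | H s ih => ?_
  intro K hKs hK hout
  rcases K.eq_empty_or_nonempty with rfl | hKne
  · exact ⟨∅, empty_subset _, by simp, by simp⟩
  obtain ⟨z, hzs, hz⟩ := hG s (hKne.mono hKs)
  by_cases hzK : z ∈ K
  · obtain ⟨u, hu, huz⟩ := hout z hzK
    exact ⟨{u}, singleton_subset_iff.2 hu, by simp, fun w hw =>
      ⟨u, mem_singleton_self u, hz.adj_of_mem_clique hKs hK hzK hu huz hw⟩⟩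
  by_cases hz_inessential : ∀ w ∈ K, ∃ p ∈ s \ K, p ≠ z ∧ G.Adj p w
  · have hKs' : K ⊆ s.erase z := fun w hw => mem_erase.2 ⟨fun h => hzK (h ▸ hw), hKs hw⟩
    obtain ⟨I, hI, hind, hdom⟩ := ih (s.erase z) (erase_ssubset hzs) K hKs' hK fun w hw => by
      obtain ⟨p, hp, hpz, hpw⟩ := hz_inessential w hw
      exact ⟨p, by simp [mem_sdiff.1 hp, hpz], hpw⟩
    exact ⟨I, hI.trans (sdiff_subset_sdiff (erase_subset z s) le_rfl), hind, hdom⟩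
  -- `z` is the only outside neighbour of some `w₀ ∈ K`: put `z` into `I` and discard `N[z]`.
  push Not at hz_inessential
  obtain ⟨w₀, hw₀, hw₀z⟩ := hz_inessential
  have hzw₀ : G.Adj z w₀ := by
    obtain ⟨p, hp, hpw₀⟩ := hout w₀ hw₀
    obtain rfl : p = z := by_contra fun hpz => hw₀z p hp hpz hpw₀
    exact hpw₀
  set s' := s \ G.closedNbhdIn s z
  have hs' : s' ⊂ s := sdiff_ssubset closedNbhdIn_subset ⟨z, self_mem_closedNbhdIn hzs⟩
  have hout' : ∀ w ∈ K ∩ s', ∃ p ∈ s' \ (K ∩ s'), G.Adj p w := by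
    intro w hw
    obtain ⟨hwK, hws'⟩ := mem_inter.1 hw
    obtain ⟨p, hp, hpw⟩ := hout w hwK
    refine ⟨p, mem_sdiff.2 ⟨mem_sdiff.2 ⟨(mem_sdiff.1 hp).1, fun hpz => ?_⟩,
      fun h => (mem_sdiff.1 hp).2 (mem_inter.1 h).1⟩, hpw⟩
    have hpz' : p ≠ z := by
      rintro rfl
      exact (mem_sdiff.1 hws').2 (mem_closedNbhdIn_of_adj (hKs hwK) hpw)
    refine hw₀z p hp hpz' (hz hpz (mem_closedNbhdIn_of_adj (hKs hw₀) hzw₀) ?_)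
    exact fun h => (mem_sdiff.1 hp).2 (h ▸ hw₀)
  obtain ⟨I, hI, hind, hdom⟩ :=
    ih s' hs' (K ∩ s') inter_subset_right (hK.subset (by simp)) hout'
  exact ⟨insert z I, insert_isIndepSet_dominating hzs hzK hKs hI hind hdom⟩

section SimplicialTransversal

variable [DecidableEq α]

lemma isMaxIndepIn_union_of_sdiff_biUnion (hTs : T ⊆ s) (hT : G.IsIndepSet (T : Set α))
    (hA : G.IsMaxIndepIn (s \ T.biUnion (G.closedNbhdIn s)) A) : G.IsMaxIndepIn s (T ∪ A) := by
  obtain ⟨hAs, hAind, hAdom⟩ := isMaxIndepIn_iff.1 hA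
  have hfar : ∀ x ∈ T, ∀ a ∈ A, ¬G.Adj x a := fun x hx a ha hxa =>
    (mem_sdiff.1 (hAs ha)).2 (mem_biUnion.2
      ⟨x, hx, mem_closedNbhdIn_of_adj (mem_sdiff.1 (hAs ha)).1 hxa⟩)
  refine isMaxIndepIn_iff.2 ⟨union_subset hTs (hAs.trans sdiff_subset), ?_, fun v hv hvTA => ?_⟩
  · rw [coe_union, isIndepSet_iff, Set.pairwise_union]
    exact ⟨hT, hAind, fun x hx a ha _ => ⟨hfar x hx a ha, fun h => hfar x hx a ha h.symm⟩⟩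
  by_cases hvU : v ∈ T.biUnion (G.closedNbhdIn s)
  · obtain ⟨x, hx, hvx⟩ := mem_biUnion.1 hvU
    exact ⟨x, mem_union_left A hx,
      adj_of_mem_closedNbhdIn hvx fun h => hvTA (mem_union_left A (h ▸ hx))⟩
  · obtain ⟨a, ha, hav⟩ := hAdom v (mem_sdiff.2 ⟨hv, hvU⟩) fun h => hvTA (mem_union_right T h)
    exact ⟨a, mem_union_right T ha, hav⟩

lemma mem_biUnion_closedNbhdIn_of_isMaxIndepIn {P : Finset α} (hT : G.IsMaxIndepIn P T)
    (hPs : P ⊆ s) (hz : z ∈ P) : z ∈ T.biUnion (G.closedNbhdIn s) := by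
  obtain ⟨hTP, -, hTdom⟩ := isMaxIndepIn_iff.1 hT
  by_cases hzT : z ∈ T
  · exact mem_biUnion.2 ⟨z, hzT, self_mem_closedNbhdIn (hPs hz)⟩
  obtain ⟨x, hx, hxz⟩ := hTdom z hz hzT
  exact mem_biUnion.2 ⟨x, hx, mem_closedNbhdIn_of_adj (hPs hz) hxz⟩

lemma disjoint_of_subset_sdiff_biUnion (hTs : T ⊆ s)
    (hA : A ⊆ s \ T.biUnion (G.closedNbhdIn s)) : Disjoint T A :=
  Finset.disjoint_left.2 fun x hx hxA =>
    (mem_sdiff.1 (hA hxA)).2 (mem_biUnion.2 ⟨x, hx, self_mem_closedNbhdIn (hTs hx)⟩)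

lemma IsWellCoveredOn.sdiff_biUnion (hw : G.IsWellCoveredOn s) (hTs : T ⊆ s)
    (hT : G.IsIndepSet (T : Set α)) : G.IsWellCoveredOn (s \ T.biUnion (G.closedNbhdIn s)) := by
  intro A B hA hB
  have := hw (isMaxIndepIn_union_of_sdiff_biUnion hTs hT hA)
    (isMaxIndepIn_union_of_sdiff_biUnion hTs hT hB)
  rwa [card_union_of_disjoint (disjoint_of_subset_sdiff_biUnion hTs hA.1.1),
    card_union_of_disjoint (disjoint_of_subset_sdiff_biUnion hTs hB.1.1), add_right_inj] at this

/-- `A` meets each `N[x]`, `x ∈ T`, and each block of `TB` at most once, while well-coveredness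
forces `#A = #T + #TB`. -/
theorem IsWellCoveredOn.not_disjoint_of_isSimplicialPartition_sdiff {TB : Finset α}
    (hw : G.IsWellCoveredOn s) (hTs : T ⊆ s) (hT : G.IsIndepSet (T : Set α))
    (hTsimp : ∀ x ∈ T, G.IsSimplicialIn s x)
    (hTB : G.IsSimplicialPartition (s \ T.biUnion (G.closedNbhdIn s)) TB)
    (hA : G.IsMaxIndepIn s A) (hy : y ∈ TB) :
    ¬Disjoint A (G.closedNbhdIn (s \ T.biUnion (G.closedNbhdIn s)) y) := by
  set B := s \ T.biUnion (G.closedNbhdIn s)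
  intro hAy
  obtain ⟨M, -, hM⟩ := exists_isMaxIndepIn_superset (G := G) (empty_subset B) (by simp)
  have hcard : #A = #T + #TB := by
    rw [hw hA (isMaxIndepIn_union_of_sdiff_biUnion hTs hT hM),
      card_union_of_disjoint (disjoint_of_subset_sdiff_biUnion hTs hM.1.1), hTB.card_eq hM]
  have hle : #A ≤ #T + #(TB.erase y) := by
    rw [← card_disjSum]
    refine card_le_card_of_forall_mem_isClique (K := Sum.elim (G.closedNbhdIn s)
      (G.closedNbhdIn B)) (isMaxIndepIn_iff.1 hA).2.1 ?_ fun a ha => ?_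
    · rintro (x | x) hx
      · exact hTsimp x (inl_mem_disjSum.1 hx)
      · exact hTB.isSimplicialIn x (mem_of_mem_erase (inr_mem_disjSum.1 hx))
    by_cases haU : a ∈ T.biUnion (G.closedNbhdIn s)
    · obtain ⟨x, hx, hax⟩ := mem_biUnion.1 haU
      exact ⟨.inl x, inl_mem_disjSum.2 hx, hax⟩
    · obtain ⟨x, hx, hax⟩ := hTB.exists_mem a (mem_sdiff.2 ⟨hA.1.1 ha, haU⟩)
      refine ⟨.inr x, inr_mem_disjSum.2 (mem_erase.2 ⟨?_, hx⟩), hax⟩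
      rintro rfl
      exact Finset.disjoint_left.1 hAy ha hax
  have := card_erase_add_one hy
  omega

end SimplicialTransversal

theorem IsChordal.exists_isSimplicialPartition (hG : G.IsChordal) (s : Finset α)
    (hw : G.IsWellCoveredOn s) : ∃ T, G.IsSimplicialPartition s T := by
  classical
  induction s using Finset.strongInduction with | H s ih => ?_
  -- `T` picks one simplicial vertex from each simplex of `s`
  obtain ⟨T, -, hT⟩ := exists_isMaxIndepIn_superset (G := G)
    (empty_subset {x ∈ s | G.IsSimplicialIn s x}) (by simp)
  obtain ⟨hTP, hTind, -⟩ := isMaxIndepIn_iff.1 hT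
  have hTs : T ⊆ s := hTP.trans (filter_subset _ s)
  have hTsimp : ∀ x ∈ T, G.IsSimplicialIn s x := fun x hx => (mem_filter.1 (hTP hx)).2
  have hsimp_mem : ∀ z ∈ s, G.IsSimplicialIn s z → z ∈ T.biUnion (G.closedNbhdIn s) :=
    fun z hzs hz => mem_biUnion_closedNbhdIn_of_isMaxIndepIn hT (filter_subset _ s)
      (mem_filter.2 ⟨hzs, hz⟩)
  set B := s \ T.biUnion (G.closedNbhdIn s)
  suffices hB : B = ∅ by
    refine ⟨T, hTs, hTsimp, fun x hx y hy hxy => ?_, fun v hv => ?_⟩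
    · exact hw.disjoint_closedNbhdIn (hTsimp x hx) (hTsimp y hy) (hTs hx) (hTs hy) hxy
        (isIndepSet_iff_forall_not_adj.1 hTind x hx y hy)
    · exact mem_biUnion.1 (by simpa [B, hB] using sdiff_eq_empty_iff_subset.1 hB hv)
  by_contra hBne
  obtain ⟨b, hb⟩ := nonempty_iff_ne_empty.2 hBne
  have hBs : B ⊂ s := by
    obtain ⟨z, hzs, hz⟩ := hG s ⟨b, (mem_sdiff.1 hb).1⟩
    exact sdiff_ssubset (biUnion_subset.2 fun _ _ => closedNbhdIn_subset) ⟨z, hsimp_mem z hzs hz⟩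
  obtain ⟨TB, hTB⟩ := ih B hBs (hw.sdiff_biUnion hTs hTind)
  obtain ⟨y, hy, -⟩ := hTB.exists_mem b hb
  set K := G.closedNbhdIn B y
  have hKs : K ⊆ s := closedNbhdIn_subset.trans sdiff_subset
  -- a vertex of `K` with no neighbour outside `K` would be simplicial in `s`, hence not in `B`
  have hout : ∀ w ∈ K, ∃ p ∈ s \ K, G.Adj p w := by
    intro w hw
    by_contra! hin
    have hwB : w ∈ B := closedNbhdIn_subset hw
    refine (mem_sdiff.1 hwB).2 (hsimp_mem w (hKs hw) ((hTB.isSimplicialIn y hy).subset ?_))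
    intro p hp
    rcases mem_closedNbhdIn.1 hp with ⟨hps, rfl | hwp⟩
    · exact hw
    · by_contra hpK
      exact hin p (mem_sdiff.2 ⟨hps, hpK⟩) hwp.symm
  obtain ⟨I, hIK, hIind, hIdom⟩ :=
    hG.exists_isIndepSet_dominating s K hKs (hTB.isSimplicialIn y hy) hout
  obtain ⟨A, hIA, hA⟩ := exists_isMaxIndepIn_superset (hIK.trans sdiff_subset) hIind
  refine hw.not_disjoint_of_isSimplicialPartition_sdiff hTs hTind hTsimp hTB hA hy
    (Finset.disjoint_right.2 fun w hwK hwA => ?_)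
  obtain ⟨a, ha, haw⟩ := hIdom w hwK
  exact isIndepSet_iff_forall_not_adj.1 (isMaxIndepIn_iff.1 hA).2.1 a (hIA ha) w hwA haw

end SimpleGraph

section FacetGraph

open SimpleGraph

variable {α ι : Type*}

def facetGraph (F : ι → Finset α) : SimpleGraph α where
  Adj x y := x ≠ y ∧ ∃ k, x ∈ F k ∧ y ∈ F k
  symm := ⟨fun _ _ ⟨hne, k, hx, hy⟩ => ⟨hne.symm, k, hy, hx⟩⟩
  loopless := ⟨fun _ h => h.1 rfl⟩

lemma facetGraph_adj {F : ι → Finset α} {x y : α} :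
    (facetGraph F).Adj x y ↔ x ≠ y ∧ ∃ k, x ∈ F k ∧ y ∈ F k :=
  Iff.rfl

lemma isSimplicialIn_facetGraph_of_forall_mem {F : ι → Finset α} {s : Finset α} {x : α} {k : ι}
    (h : ∀ j, x ∈ F j → j = k) : (facetGraph F).IsSimplicialIn s x := by
  intro p hp q hq hpq
  rcases eq_or_ne p x with rfl | hpx
  · exact adj_of_mem_closedNbhdIn hq (Ne.symm hpq)
  rcases eq_or_ne q x with rfl | hqx
  · exact (adj_of_mem_closedNbhdIn hp hpx).symm
  obtain ⟨-, j, hxj, hpj⟩ := facetGraph_adj.1 (adj_of_mem_closedNbhdIn hp hpx)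
  obtain ⟨-, j', hxj', hqj'⟩ := facetGraph_adj.1 (adj_of_mem_closedNbhdIn hq hqx)
  rw [h j hxj] at hpj
  rw [h j' hxj'] at hqj'
  exact facetGraph_adj.2 ⟨hpq, k, hpj, hqj'⟩

lemma closedNbhdIn_univ_facetGraph_eq [Fintype α] {F : ι → Finset α} {x : α} {i : ι}
    (hx : x ∈ F i) (h : ∀ j, x ∈ F j → j = i) : (facetGraph F).closedNbhdIn univ x = F i := by
  ext y
  rw [mem_closedNbhdIn, facetGraph_adj]
  refine ⟨?_, fun hy => ⟨mem_univ y, or_iff_not_imp_left.2 fun hyx => ⟨Ne.symm hyx, i, hx, hy⟩⟩⟩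
  rintro ⟨-, rfl | ⟨-, j, hxj, hyj⟩⟩
  · exact hx
  · rwa [← h j hxj]

lemma facet_subset_closedNbhdIn_univ [Fintype α] {F : ι → Finset α} {x : α} {k : ι}
    (hx : x ∈ F k) : F k ⊆ (facetGraph F).closedNbhdIn univ x := fun y hy => by
  rcases eq_or_ne y x with rfl | hyx
  · exact self_mem_closedNbhdIn (mem_univ y)
  · exact mem_closedNbhdIn_of_adj (mem_univ y) (facetGraph_adj.2 ⟨hyx.symm, k, hx, hy⟩)

theorem isSimplicialPartition_of_free_facets [Fintype α] {F : ι → Finset α} {S : Finset ι}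
    (hdisj : (S : Set ι).PairwiseDisjoint F) (hcov : ∀ v, ∃ i ∈ S, v ∈ F i)
    (hfree : ∀ i ∈ S, ∃ x ∈ F i, ∀ j, j ≠ i → x ∉ F j) :
    ∃ T, (facetGraph F).IsSimplicialPartition univ T := by
  classical
  choose x hxF hxfree using fun i : S => hfree i i.2
  have hx : ∀ i j, x i ∈ F j → j = i := fun i j hj =>
    by_contra fun hji => hxfree i j hji hj
  have hN : ∀ i, (facetGraph F).closedNbhdIn univ (x i) = F i := fun i =>
    closedNbhdIn_univ_facetGraph_eq (hxF i) (hx i)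
  refine ⟨univ.image x, subset_univ _, fun y hy => ?_, fun y hy z hz hyz => ?_, fun v _ => ?_⟩
  · obtain ⟨i, -, rfl⟩ := mem_image.1 hy
    exact isSimplicialIn_facetGraph_of_forall_mem (hx i)
  · obtain ⟨i, -, rfl⟩ := mem_image.1 (mem_coe.1 hy)
    obtain ⟨j, -, rfl⟩ := mem_image.1 (mem_coe.1 hz)
    rw [Function.onFun, hN i, hN j]
    exact hdisj i.2 j.2 fun h => hyz (congrArg x (Subtype.ext h))
  · obtain ⟨i, hi, hvi⟩ := hcov v
    exact ⟨x ⟨i, hi⟩, mem_image_of_mem x (mem_univ _), (hN ⟨i, hi⟩).symm ▸ hvi⟩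

/-- A simplicial complex is a quasi-forest iff its facets can be ordered in this way. -/
def IsLeafOrder [DecidableEq α] {m : ℕ} (F : Fin (m + 1) → Finset α) : Prop :=
  ∀ i : Fin (m + 1), 0 < (i : ℕ) → ∃ t, t < i ∧ ∀ j, j < i → F j ∩ F i ⊆ F t

namespace IsLeafOrder

variable [DecidableEq α] {m : ℕ} {F : Fin (m + 2) → Finset α}

lemma init (hF : IsLeafOrder F) : IsLeafOrder (Fin.init F) := by
  intro i hi
  obtain ⟨t, hti, hsub⟩ := hF i.castSucc hi
  have ht : (t : ℕ) < m + 1 := lt_of_lt_of_le hti (Nat.le_of_lt_succ (by simp))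
  refine ⟨t.castLT ht, hti, fun j hj => ?_⟩
  simpa [Fin.init] using hsub j.castSucc (Fin.castSucc_lt_castSucc_iff.2 hj)

lemma exists_branch (hF : IsLeafOrder F) :
    ∃ t : Fin (m + 1), ∀ j, j ≠ Fin.last (m + 1) → F j ∩ F (Fin.last (m + 1)) ⊆ F t.castSucc := by
  obtain ⟨t, ht, hsub⟩ := hF (Fin.last (m + 1)) (by simp)
  exact ⟨t.castLT ht, fun j hj => by simpa using hsub j (Fin.lt_last_iff_ne_last.2 hj)⟩

end IsLeafOrder

section Leaf

variable {m : ℕ} {F : Fin (m + 2) → Finset α} {t : Fin (m + 1)}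

lemma eq_last_of_mem_leaf [DecidableEq α]
    (ht : ∀ j, j ≠ Fin.last (m + 1) → F j ∩ F (Fin.last (m + 1)) ⊆ F t.castSucc) {x : α}
    (hxL : x ∈ F (Fin.last (m + 1))) (hxt : x ∉ F t.castSucc) {j : Fin (m + 2)} (hxj : x ∈ F j) :
    j = Fin.last (m + 1) :=
  by_contra fun hj => hxt (ht j hj (mem_inter.2 ⟨hxj, hxL⟩))

lemma exists_mem_init_of_mem {x y : α}
    (hx : x ∈ F (Fin.last (m + 1)) → x ∈ F t.castSucc)
    (hy : y ∈ F (Fin.last (m + 1)) → y ∈ F t.castSucc) {k : Fin (m + 2)} (hxk : x ∈ F k)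
    (hyk : y ∈ F k) : ∃ k', x ∈ Fin.init F k' ∧ y ∈ Fin.init F k' := by
  by_cases hk : k = Fin.last (m + 1)
  · subst hk
    exact ⟨t, hx hxk, hy hyk⟩
  · obtain ⟨k', rfl⟩ := Fin.exists_castSucc_eq.2 hk
    exact ⟨k', hxk, hyk⟩

lemma facetGraph_init_adj {x y : α} (hx : x ∈ F (Fin.last (m + 1)) → x ∈ F t.castSucc)
    (hy : y ∈ F (Fin.last (m + 1)) → y ∈ F t.castSucc) (h : (facetGraph F).Adj x y) :
    (facetGraph (Fin.init F)).Adj x y := by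
  obtain ⟨hne, k, hxk, hyk⟩ := facetGraph_adj.1 h
  exact facetGraph_adj.2 ⟨hne, exists_mem_init_of_mem hx hy hxk hyk⟩

end Leaf

theorem IsLeafOrder.isChordal [DecidableEq α] :
    ∀ {m : ℕ} {F : Fin (m + 1) → Finset α}, IsLeafOrder F → (facetGraph F).IsChordal
  | 0, _, _ => fun _ ⟨x, hx⟩ =>
    ⟨x, hx, isSimplicialIn_facetGraph_of_forall_mem fun j _ => Fin.eq_zero j⟩
  | _ + 1, F, hF => by
    intro s hs
    obtain ⟨t, ht⟩ := hF.exists_branch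
    by_cases hleaf : ∃ x ∈ s, x ∈ F (Fin.last _) ∧ x ∉ F t.castSucc
    · obtain ⟨x, hxs, hxL, hxt⟩ := hleaf
      exact ⟨x, hxs, isSimplicialIn_facetGraph_of_forall_mem fun j hxj =>
        eq_last_of_mem_leaf ht hxL hxt hxj⟩
    push Not at hleaf
    obtain ⟨x, hxs, hx⟩ := hF.init.isChordal s hs
    refine ⟨x, hxs, fun p hp q hq hpq => ?_⟩
    have hlift : ∀ {r}, r ∈ (facetGraph F).closedNbhdIn s x →
        r ∈ (facetGraph (Fin.init F)).closedNbhdIn s x := fun {r} hr => by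
      obtain ⟨hrs, rfl | hxr⟩ := mem_closedNbhdIn.1 hr
      · exact self_mem_closedNbhdIn hrs
      · exact mem_closedNbhdIn_of_adj hrs
          (facetGraph_init_adj (hleaf x hxs) (hleaf r hrs) hxr)
    obtain ⟨hne, k, hpk, hqk⟩ := facetGraph_adj.1 (hx (hlift hp) (hlift hq) hpq)
    exact facetGraph_adj.2 ⟨hne, k.castSucc, hpk, hqk⟩

theorem IsLeafOrder.exists_subset_facet [DecidableEq α] :
    ∀ {m : ℕ} {F : Fin (m + 1) → Finset α}, IsLeafOrder F → ∀ {K : Finset α},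
      (facetGraph F).IsClique (K : Set α) → (∀ v ∈ K, ∃ i, v ∈ F i) → ∃ k, K ⊆ F k
  | 0, F, _, K, _, hK => ⟨0, fun v hv => by
      obtain ⟨i, hi⟩ := hK v hv
      rwa [Fin.eq_zero i] at hi⟩
  | _ + 1, F, hF, K, hcl, hK => by
    obtain ⟨t, ht⟩ := hF.exists_branch
    by_cases hleaf : ∃ x ∈ K, x ∈ F (Fin.last _) ∧ x ∉ F t.castSucc
    · obtain ⟨x, hxK, hxL, hxt⟩ := hleaf
      refine ⟨Fin.last _, fun y hy => ?_⟩
      rcases eq_or_ne y x with rfl | hyx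
      · exact hxL
      obtain ⟨-, j, hxj, hyj⟩ := facetGraph_adj.1 (hcl hxK hy hyx.symm)
      rwa [eq_last_of_mem_leaf ht hxL hxt hxj] at hyj
    push Not at hleaf
    obtain ⟨k, hk⟩ := hF.init.exists_subset_facet
      (fun p hp q hq hpq => facetGraph_init_adj (hleaf p hp) (hleaf q hq) (hcl hp hq hpq))
      fun v hv => by
        obtain ⟨i, hi⟩ := hK v hv
        obtain ⟨k, hk, -⟩ := exists_mem_init_of_mem (hleaf v hv) (hleaf v hv) hi hi
        exact ⟨k, hk⟩
    exact ⟨k.castSucc, hk⟩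

theorem IsLeafOrder.exists_closedNbhdIn_univ_eq_facet [Fintype α] [DecidableEq α] {m : ℕ}
    {F : Fin (m + 1) → Finset α} (hF : IsLeafOrder F) (hvert : ∀ v, ∃ i, v ∈ F i) {x : α}
    (hx : (facetGraph F).IsSimplicialIn univ x) :
    ∃ k, (facetGraph F).closedNbhdIn univ x = F k := by
  obtain ⟨k, hk⟩ := hF.exists_subset_facet hx fun v _ => hvert v
  exact ⟨k, hk.antisymm
    (facet_subset_closedNbhdIn_univ (hk (self_mem_closedNbhdIn (mem_univ x))))⟩

theorem SimpleGraph.IsSimplicialPartition.exists_free_facets [Fintype α] [DecidableEq α]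
    {m : ℕ} {F : Fin (m + 1) → Finset α} {T : Finset α} (hfac : ∀ i j, i ≠ j → ¬F i ⊆ F j)
    (hF : IsLeafOrder F) (hvert : ∀ v, ∃ i, v ∈ F i)
    (hT : (facetGraph F).IsSimplicialPartition univ T) :
    ∃ S : Finset (Fin (m + 1)), (S : Set (Fin (m + 1))).PairwiseDisjoint F ∧
      (∀ v, ∃ i ∈ S, v ∈ F i) ∧ ∀ i ∈ S, ∃ x ∈ F i, ∀ j, j ≠ i → x ∉ F j := by
  choose! k hk using fun x hx =>
    hF.exists_closedNbhdIn_univ_eq_facet hvert (hT.isSimplicialIn x hx)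
  refine ⟨T.image k, fun _ hi _ hj hij => ?_, fun v => ?_, fun _ hi => ?_⟩
  · obtain ⟨x, hx, rfl⟩ := mem_image.1 (mem_coe.1 hi)
    obtain ⟨y, hy, rfl⟩ := mem_image.1 (mem_coe.1 hj)
    rw [Function.onFun, ← hk x hx, ← hk y hy]
    exact hT.pairwiseDisjoint hx hy fun h => hij (h ▸ rfl)
  · obtain ⟨x, hx, hvx⟩ := hT.exists_mem v (mem_univ v)
    exact ⟨k x, mem_image_of_mem k hx, hk x hx ▸ hvx⟩
  · obtain ⟨x, hx, rfl⟩ := mem_image.1 hi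
    have hxk : x ∈ F (k x) := hk x hx ▸ self_mem_closedNbhdIn (mem_univ x)
    refine ⟨x, hxk, fun j hj hxj => hfac j (k x) hj ?_⟩
    rw [← hk x hx]
    exact facet_subset_closedNbhdIn_univ hxj

end FacetGraph

section VertexCover

open SimpleGraph

variable {n m : ℕ} {F : Fin (m + 1) → Finset (Fin n)} {C : Finset (Fin n)}

lemma isVC_iff_isIndepSet_compl :
    IsVC F C ↔ (facetGraph F).IsIndepSet ((Cᶜ : Finset (Fin n)) : Set (Fin n)) := by
  simp only [isIndepSet_iff_forall_not_adj, IsVC, coe_compl, Set.mem_compl_iff, mem_coe,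
    facetGraph_adj]
  constructor
  · rintro h a ha b hb ⟨hne, k, hak, hbk⟩
    exact (h a b k hne hak hbk).elim ha hb
  · intro h i j k hne hik hjk
    by_contra! hij
    exact h i hij.1 j hij.2 ⟨hne, k, hik, hjk⟩

lemma isMinVC_iff_isMaxIndepIn_compl : IsMinVC F C ↔ (facetGraph F).IsMaxIndepIn univ Cᶜ := by
  simp only [IsMinVC, IsMaxIndepIn, Maximal, isVC_iff_isIndepSet_compl, subset_univ, true_and]
  refine and_congr_right fun _ => ⟨fun hmin A hA hCA => ?_, fun hmax C' hC' hC'ind => ?_⟩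
  · rw [← compl_compl A, hmin Aᶜ (compl_le_of_compl_le hCA) (by rwa [compl_compl])]
  · exact hC'.antisymm (compl_subset_compl.1 (hmax hC'ind (compl_subset_compl.2 hC')))

lemma unmixed_iff_isWellCoveredOn :
    (∀ C C' : Finset (Fin n), IsMinVC F C → IsMinVC F C' → #C = #C') ↔
      (facetGraph F).IsWellCoveredOn univ := by
  have hcompl : ∀ A B : Finset (Fin n), #Aᶜ = #Bᶜ ↔ #A = #B := fun A B => by
    rw [card_compl, card_compl]
    have := card_le_univ A
    have := card_le_univ B
    omega
  refine ⟨fun h A B hA hB => ?_, fun h C C' hC hC' => ?_⟩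
  · rw [← compl_compl A, ← isMinVC_iff_isMaxIndepIn_compl] at hA
    rw [← compl_compl B, ← isMinVC_iff_isMaxIndepIn_compl] at hB
    exact (hcompl A B).1 (h _ _ hA hB)
  · exact (hcompl C C').1 (h (isMinVC_iff_isMaxIndepIn_compl.1 hC)
      (isMinVC_iff_isMaxIndepIn_compl.1 hC'))

end VertexCover

/-- For a quasi-forest `Δ` on `[n]` with facets `F_0,…,F_m` (leaf order), the chordal graph
`G_Δ` is unmixed (all minimal vertex covers have the same cardinality) if and only if `[n]` is
the disjoint union of facets of `Δ` each of which contains a free vertex. -/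
theorem stmt10 {n m : ℕ} (F : Fin (m + 1) → Finset (Fin n))
    (hfac : ∀ i j, i ≠ j → ¬ F i ⊆ F j)
    (hleaf : ∀ i : Fin (m + 1), 0 < (i : ℕ) →
      ∃ t, t < i ∧ ∀ j, j < i → F j ∩ F i ⊆ F t)
    (hvert : ∀ x : Fin n, ∃ i, x ∈ F i) :
    (∀ C C' : Finset (Fin n), IsMinVC F C → IsMinVC F C' → C.card = C'.card) ↔
    (∃ S : Finset (Fin (m + 1)),
      (S : Set (Fin (m + 1))).PairwiseDisjoint F ∧
      (∀ x : Fin n, ∃ i ∈ S, x ∈ F i) ∧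
      ∀ i ∈ S, ∃ x ∈ F i, ∀ j, j ≠ i → x ∉ F j) := by
  rw [unmixed_iff_isWellCoveredOn]
  constructor
  · intro hw
    obtain ⟨T, hT⟩ := (IsLeafOrder.isChordal hleaf).exists_isSimplicialPartition univ hw
    exact hT.exists_free_facets hfac hleaf hvert
  · rintro ⟨S, hdisj, hcov, hfree⟩
    obtain ⟨T, hT⟩ := isSimplicialPartition_of_free_facets hdisj hcov hfree
    exact hT.isWellCoveredOn
end

section
/- Let Δ be a quasi-forest with leaf order F_1 < ⋯ < F_m, and let G_i ∈ A_ℓ and G_j ∈ A_{ℓ'} be faces with ℓ < ℓ' and x ∈ (G_i ∩ F_{ℓ'}) \ G_j. Then G_j ∪ {x} is a face of Δ (contained in F_{ℓ'}) and G_i \ {x} is a face of Δ, and moreover the monomial identity x_{G_i} x_{G_j} = x_{G_i \ {x}} x_{G_j ∪ {x}} holds in K[x_1,…,x_n]. -/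
open MvPolynomial Finset

/-- For a quasi-forest `Δ` with facets `F_0 < ⋯ < F_m` (leaf order), if `G_i ∈ A_ℓ`,
`G_j ∈ A_{ℓ'}` with `ℓ < ℓ'` and `x ∈ (G_i ∩ F_{ℓ'}) \ G_j`, then `G_j ∪ {x}` is a face of `Δ`
(contained in `F_{ℓ'}`), `G_i \ {x}` is a face of `Δ`, and
`x_{G_i} x_{G_j} = x_{G_i \ {x}} x_{G_j ∪ {x}}` in `K[x_1,…,x_n]`. -/
theorem stmt13 {K : Type*} [Field K] {n m : ℕ}
    (F : Fin (m + 1) → Finset (Fin n))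
    (hfac : ∀ i j, i ≠ j → ¬ F i ⊆ F j)
    (hleaf : ∀ i : Fin (m + 1), 0 < (i : ℕ) →
      ∃ t, t < i ∧ ∀ j, j < i → F j ∩ F i ⊆ F t)
    (l l' : Fin (m + 1)) (hll : l < l')
    (Gi Gj : Finset (Fin n))
    (hGi : Gi ⊆ F l ∧ ∀ l'', l'' < l → ¬ Gi ⊆ F l'')
    (hGj : Gj ⊆ F l' ∧ ∀ l'', l'' < l' → ¬ Gj ⊆ F l'')
    (x : Fin n) (hx1 : x ∈ Gi) (hx2 : x ∈ F l') (hx3 : x ∉ Gj) :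
    Gj ∪ {x} ⊆ F l' ∧ (∃ k, Gi \ {x} ⊆ F k) ∧
    (∏ v ∈ Gi, (X v : MvPolynomial (Fin n) K)) * ∏ v ∈ Gj, X v =
      (∏ v ∈ Gi \ {x}, X v) * ∏ v ∈ Gj ∪ {x}, X v := by
  refine ⟨?_, ⟨l, (sdiff_subset).trans hGi.1⟩, ?_⟩
  · exact union_subset hGj.1 (singleton_subset_iff.mpr hx2)
  · have h1 : (∏ v ∈ Gi, (X v : MvPolynomial (Fin n) K)) =
        (∏ v ∈ Gi \ {x}, X v) * X x := by
      exact Finset.prod_eq_prod_diff_singleton_mul hx1 _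
    have h2 : (∏ v ∈ Gj ∪ {x}, (X v : MvPolynomial (Fin n) K)) =
        X x * ∏ v ∈ Gj, X v := by
      rw [Finset.union_comm, ← Finset.insert_eq, Finset.prod_insert hx3]
    rw [h1, h2]; ring
end
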